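/- arXiv:2509.15679 — 3 statements merged into one kernel-verified Lean document; each statement's English description precedes it below -/
import Mathlib

section
/- Let (W, ω) be a real symplectic vector space and let c : W → W be an invertible linear map that maps every Lagrangian subspace of W to a Lagrangian subspace. Then there exists a nonzero real number λ_c such that ω(c(u), c(v)) = λ_c · ω(u, v) for all u, v ∈ W. -/
/-!
If `ω u v = 0`, then `u` and `v` span an isotropic subspace, which extends to a maximal isotropic,
i.e. Lagrangian, subspace `Λ`; since `c Λ` is again Lagrangian, `ω (c u) (c v) = 0`. So the form
`ω' = ω (c ·) (c ·)` vanishes wherever `ω` does. Testing this on `ω u v' • v - ω u v • v'` gives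
`ω' u v * ω u v' = ω' u v' * ω u v`, and the same in the first variable, which forces `ω'` to be a
constant multiple of `ω`; the constant is nonzero because `ω'` is nondegenerate.
-/

open LinearMap Submodule

namespace LinearMap.BilinForm

variable {R M : Type*} [CommRing R] [AddCommGroup M] [Module R M] {B : LinearMap.BilinForm R M}
  {N L : Submodule R M}

theorem orthogonal_sup : B.orthogonal (N ⊔ L) = B.orthogonal N ⊓ B.orthogonal L := by
  refine le_antisymm (le_inf (orthogonal_le le_sup_left) (orthogonal_le le_sup_right)) ?_
  rintro x ⟨hxN, hxL⟩ m hm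
  obtain ⟨n, hn, l, hl, rfl⟩ := mem_sup.1 hm
  rw [map_add, LinearMap.add_apply, hxN n hn, hxL l hl, add_zero]

theorem le_orthogonal_comm (hB : B.IsRefl) : N ≤ B.orthogonal L ↔ L ≤ B.orthogonal N :=
  ⟨fun h _ hx _ hy => hB _ _ (h hy _ hx), fun h _ hx _ hy => hB _ _ (h hy _ hx)⟩

theorem span_singleton_le_orthogonal_self (hB : B.IsAlt) (x : M) :
    R ∙ x ≤ B.orthogonal (R ∙ x) := by
  rw [span_singleton_le_iff_mem]
  intro n hn
  obtain ⟨r, rfl⟩ := mem_span_singleton.1 hn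
  simp [hB x]

theorem sup_span_singleton_le_orthogonal (hB : B.IsAlt) (hN : N ≤ B.orthogonal N) {x : M}
    (hx : x ∈ B.orthogonal N) : N ⊔ R ∙ x ≤ B.orthogonal (N ⊔ R ∙ x) := by
  have hxN : R ∙ x ≤ B.orthogonal N := (span_singleton_le_iff_mem _ _).2 hx
  rw [orthogonal_sup]
  exact le_inf (sup_le hN hxN)
    (sup_le ((le_orthogonal_comm hB.isRefl).1 hxN) (span_singleton_le_orthogonal_self hB x))

theorem exists_le_eq_orthogonal [IsNoetherian R M] (hB : B.IsAlt) (hN : N ≤ B.orthogonal N) :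
    ∃ Λ, N ≤ Λ ∧ Λ = B.orthogonal Λ := by
  obtain ⟨Λ, ⟨hNΛ, hΛ⟩, hmax⟩ := set_has_maximal_iff_noetherian.2 ‹_›
    {Λ | N ≤ Λ ∧ Λ ≤ B.orthogonal Λ} ⟨N, le_rfl, hN⟩
  refine ⟨Λ, hNΛ, le_antisymm hΛ fun x hx => ?_⟩
  by_contra hxΛ
  refine hmax (Λ ⊔ R ∙ x) ⟨hNΛ.trans le_sup_left, sup_span_singleton_le_orthogonal hB hΛ hx⟩ ?_
  rwa [left_lt_sup, span_singleton_le_iff_mem]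

theorem exists_eq_orthogonal_of_apply_eq_zero [IsNoetherian R M] (hB : B.IsAlt) {u v : M}
    (huv : B u v = 0) : ∃ Λ, Λ = B.orthogonal Λ ∧ u ∈ Λ ∧ v ∈ Λ := by
  have hv : v ∈ B.orthogonal (R ∙ u) := by
    intro n hn
    obtain ⟨r, rfl⟩ := mem_span_singleton.1 hn
    simp [huv]
  obtain ⟨Λ, huvΛ, hΛ⟩ := exists_le_eq_orthogonal hB
    (sup_span_singleton_le_orthogonal hB (span_singleton_le_orthogonal_self hB u) hv)
  exact ⟨Λ, hΛ, huvΛ (mem_sup_left (mem_span_singleton_self u)),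
    huvΛ (mem_sup_right (mem_span_singleton_self v))⟩

theorem apply_apply_eq_zero_of_map_eq_orthogonal [IsNoetherian R M] (hB : B.IsAlt)
    {f : M →ₗ[R] M} (hf : ∀ Λ, Λ = B.orthogonal Λ → Λ.map f = B.orthogonal (Λ.map f))
    {u v : M} (huv : B u v = 0) : B (f u) (f v) = 0 := by
  obtain ⟨Λ, hΛ, hu, hv⟩ := exists_eq_orthogonal_of_apply_eq_zero hB huv
  exact (hf Λ hΛ).le (mem_map_of_mem hv) _ (mem_map_of_mem hu)

end LinearMap.BilinForm

namespace LinearMap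

variable {K M N : Type*} [Field K] [AddCommGroup M] [Module K M] [AddCommGroup N] [Module K N]
  {B B' : M →ₗ[K] N →ₗ[K] K}

theorem apply_mul_apply_eq_of_apply_eq_zero_imp (h : ∀ u v, B u v = 0 → B' u v = 0)
    (u : M) (v v' : N) : B' u v * B u v' = B' u v' * B u v := by
  have := h u (B u v' • v - B u v • v') (by simp only [map_sub, map_smul, smul_eq_mul]; ring)
  simp only [map_sub, map_smul, smul_eq_mul] at this
  linear_combination this

theorem apply_eq_div_mul_of_apply_eq_zero_imp (h : ∀ u v, B u v = 0 → B' u v = 0) {u₀ : M}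
    {v₀ : N} (h₀ : B u₀ v₀ ≠ 0) (u : M) (v : N) : B' u v = B' u₀ v₀ / B u₀ v₀ * B u v := by
  set l := B' u₀ v₀ / B u₀ v₀
  have hrow : ∀ v, B' u₀ v = l * B u₀ v := fun v => by
    rw [div_mul_eq_mul_div, eq_div_iff h₀]
    linear_combination apply_mul_apply_eq_of_apply_eq_zero_imp h u₀ v v₀
  have hcol : ∀ u v, B u₀ v ≠ 0 → B' u v = l * B u v := fun u v hv => by
    refine mul_right_cancel₀ hv ?_
    have := apply_mul_apply_eq_of_apply_eq_zero_imp (B := B.flip) (B' := B'.flip)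
      (fun v u => h u v) v u u₀
    simp only [flip_apply] at this
    linear_combination this + B u v * hrow v
  by_cases hv : B u₀ v = 0
  · have hv₀ : B u₀ (v + v₀) ≠ 0 := by simpa [hv] using h₀
    calc B' u v = B' u (v + v₀) - B' u v₀ := by simp
      _ = l * B u v := by rw [hcol u _ hv₀, hcol u _ h₀, map_add]; ring
  · exact hcol u v hv

theorem exists_ne_zero_forall_apply_eq_mul (h : ∀ u v, B u v = 0 → B' u v = 0)
    (hker : ker B' ≤ ker B) : ∃ l ≠ 0, ∀ u v, B' u v = l * B u v := by
  by_cases hB : ∀ u v, B u v = 0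
  · exact ⟨1, one_ne_zero, fun u v => by rw [h u v (hB u v), hB u v, mul_zero]⟩
  push Not at hB
  obtain ⟨u₀, v₀, h₀⟩ := hB
  refine ⟨_, fun hl => h₀ ?_, apply_eq_div_mul_of_apply_eq_zero_imp h h₀⟩
  have hu₀ : u₀ ∈ ker B' := by
    ext v
    simp [apply_eq_div_mul_of_apply_eq_zero_imp h h₀ u₀ v, hl]
  exact congr($(hker hu₀) v₀)

end LinearMap

/-- An invertible linear map of a (finite-dimensional, real) symplectic
vector space `(W, ω)` that maps every Lagrangian subspace to a Lagrangian subspace is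
conformal symplectic: there is a nonzero `l` with `ω (c u) (c v) = l * ω u v`. -/
theorem stmt0 (W : Type*) [AddCommGroup W] [Module ℝ W] [FiniteDimensional ℝ W]
    (ω : LinearMap.BilinForm ℝ W) (hnd : ω.Nondegenerate) (halt : ω.IsAlt)
    (c : W ≃ₗ[ℝ] W)
    (hc : ∀ Λ : Submodule ℝ W, Λ = ω.orthogonal Λ →
      Submodule.map (c : W →ₗ[ℝ] W) Λ = ω.orthogonal (Submodule.map (c : W →ₗ[ℝ] W) Λ)) :
    ∃ l : ℝ, l ≠ 0 ∧ ∀ u v : W, ω (c u) (c v) = l * ω u v := by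
  -- `BilinForm.congr c.symm ω` is the form `ω (c ·) (c ·)`.
  have hker : ker (BilinForm.congr c.symm ω) ≤ ker ω := by
    rw [(hnd.congr c.symm).ker_eq_bot]
    exact bot_le
  exact exists_ne_zero_forall_apply_eq_mul
    (fun u v huv => BilinForm.apply_apply_eq_zero_of_map_eq_orthogonal halt hc huv) hker
end

section
/- Let n ≥ 1 and let S : I → Sym(n, ℝ) be a smooth curve of symmetric n×n matrices defined on an open interval I, and let Γ(t) = {(x, S_t x) : x ∈ ℝⁿ} be the corresponding curve of Lagrangian subspaces in ℝ²ⁿ with the standard symplectic form. For v₀ = (x₀, S_{t₀} x₀) ∈ Γ(t₀) and any smooth curve v(t) ∈ Γ(t) with v(t₀) = v₀, the value ω(v₀, v'(t₀)) equals x₀ᵀ S'_{t₀} x₀; in particular it is independent of the choice of the curve v. -/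
/-! Differentiating `(v t).2 = S t *ᵥ (v t).1` at `t₀` gives `v'.2 = S' *ᵥ x₀ + S t₀ *ᵥ v'.1`.
In `ω((x₀, S t₀ x₀), v')` the contribution of `S t₀ *ᵥ v'.1` cancels against `v'.1 ⬝ᵥ S t₀ x₀`
because `S t₀` is symmetric, leaving `x₀ ⬝ᵥ S' *ᵥ x₀`. -/

open Matrix

attribute [local instance] Matrix.normedAddCommGroup Matrix.normedSpace

/-- The standard symplectic form on `ℝⁿ × ℝⁿ`. -/
def stdOmega (n : ℕ) (p q : (Fin n → ℝ) × (Fin n → ℝ)) : ℝ :=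
  p.1 ⬝ᵥ q.2 - q.1 ⬝ᵥ p.2

open Filter Topology

section MulVec

variable {𝕜 : Type*} [NontriviallyNormedField 𝕜] {m p : Type*} [Fintype p]
  {A : 𝕜 → Matrix m p 𝕜} {A' : Matrix m p 𝕜} {t : 𝕜}

theorem HasDerivAt.matrix_mulVec {u : 𝕜 → p → 𝕜} {u' : p → 𝕜}
    (hA : HasDerivAt A A' t) (hu : HasDerivAt u u' t) :
    HasDerivAt (fun s => A s *ᵥ u s) (A' *ᵥ u t + A t *ᵥ u') t := by
  rw [hasDerivAt_pi]
  intro i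
  have hAi : ∀ j, HasDerivAt (fun s => A s i j) (A' i j) t := fun j =>
    hasDerivAt_pi.1 (hasDerivAt_pi.1 hA i) j
  have hsum := HasDerivAt.fun_sum (u := Finset.univ)
    fun j _ => (hAi j).fun_mul (hasDerivAt_pi.1 hu j)
  simpa only [mulVec, dotProduct, Pi.add_apply, Finset.sum_add_distrib] using hsum

theorem HasDerivAt.snd_eq_of_eventually_mem_graph [Fintype m] {v : 𝕜 → (p → 𝕜) × (m → 𝕜)}
    {v' : (p → 𝕜) × (m → 𝕜)} (hv : HasDerivAt v v' t) (hA : HasDerivAt A A' t)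
    (hgraph : ∀ᶠ s in 𝓝 t, (v s).2 = A s *ᵥ (v s).1) :
    v'.2 = A' *ᵥ (v t).1 + A t *ᵥ v'.1 :=
  HasDerivAt.unique hv.snd <| (hA.matrix_mulVec hv.fst).congr_of_eventuallyEq hgraph

end MulVec

theorem stdOmega_graph_eq_of_transpose_eq {n : ℕ} {A : Matrix (Fin n) (Fin n) ℝ}
    (hA : Aᵀ = A) (x b : Fin n → ℝ) {q : (Fin n → ℝ) × (Fin n → ℝ)}
    (hq : q.2 = b + A *ᵥ q.1) :
    stdOmega n (x, A *ᵥ x) q = x ⬝ᵥ b := by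
  have hswap : x ⬝ᵥ A *ᵥ q.1 = q.1 ⬝ᵥ A *ᵥ x := by
    rw [dotProduct_mulVec, dotProduct_comm, ← mulVec_transpose, hA]
  rw [stdOmega, hq, dotProduct_add, hswap, add_sub_cancel_right]

/-- for a smooth curve of symmetric matrices `S` and the corresponding
curve of Lagrangian graphs `Γ(t) = {(x, S_t x)}`, for any differentiable curve
`v(t) ∈ Γ(t)` with `v(t₀) = (x₀, S_{t₀} x₀)`, the value `ω(v(t₀), v'(t₀))` equals
`x₀ᵀ S'_{t₀} x₀`; in particular it does not depend on the chosen curve `v`. -/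
theorem stmt5 (n : ℕ) (I : Set ℝ) (hI : IsOpen I) (t₀ : ℝ) (ht₀ : t₀ ∈ I)
    (S : ℝ → Matrix (Fin n) (Fin n) ℝ) (S' : Matrix (Fin n) (Fin n) ℝ)
    (hSsym : ∀ t ∈ I, (S t)ᵀ = S t)
    (hS : HasDerivAt S S' t₀)
    (x₀ : Fin n → ℝ)
    (v : ℝ → (Fin n → ℝ) × (Fin n → ℝ)) (v' : (Fin n → ℝ) × (Fin n → ℝ))
    (hvmem : ∀ t ∈ I, (v t).2 = (S t).mulVec ((v t).1))
    (hv₀ : v t₀ = (x₀, (S t₀).mulVec x₀))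
    (hv : HasDerivAt v v' t₀) :
    stdOmega n (v t₀) v' = x₀ ⬝ᵥ S'.mulVec x₀ := by
  have hsnd := hv.snd_eq_of_eventually_mem_graph hS (eventually_of_mem (hI.mem_nhds ht₀) hvmem)
  rw [hv₀] at hsnd ⊢
  exact stdOmega_graph_eq_of_transpose_eq (hSsym t₀ ht₀) x₀ _ hsnd
end

section
/- Let (A, B, Ā, B̄) : I → (ℝ^{n×n})⁴ solve A' = AΣ + Ā, B' = BΣ + B̄ with Σ skew-symmetric, and satisfy the symplectic relations AᵀB = BᵀA, AᵀB̄ − BᵀĀ = Id, with A invertible on I. Define S = B A^{-1}. Then S is symmetric and S' = (A Aᵀ)^{-1}; in particular S' is positive definite and Aᵀ S' A = Id. -/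
/-!
Differentiating `S = B A⁻¹` gives `S' = (B' - B A⁻¹ A') A⁻¹`; substituting the equations of motion,
the `Σ` terms cancel and `S' = (B̄ - B A⁻¹ Ā) A⁻¹`. The relation `AᵀB = BᵀA` says
`Aᵀ (B A⁻¹) = Bᵀ`, which gives the symmetry of `S` and turns `AᵀB̄ - BᵀĀ = 1` into
`Aᵀ (B̄ - B A⁻¹ Ā) = 1`, so `S' = Aᵀ⁻¹ A⁻¹ = (A Aᵀ)⁻¹`.
-/

open Matrix

attribute [local instance] Matrix.normedAddCommGroup Matrix.normedSpace

theorem HasDerivAt.ringInverse {𝕜 R : Type*} [NontriviallyNormedField 𝕜] [NormedRing R]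
    [HasSummableGeomSeries R] [NormedAlgebra 𝕜 R] {f : 𝕜 → R} {f' : R} {x : 𝕜}
    (hf : HasDerivAt f f' x) (hx : IsUnit (f x)) :
    HasDerivAt (fun y => Ring.inverse (f y)) (-(Ring.inverse (f x) * f' * Ring.inverse (f x))) x := by
  obtain ⟨u, hu⟩ := hx
  have h := hasFDerivAt_ringInverse (𝕜 := 𝕜) u
  rw [hu] at h
  simpa [← hu, Function.comp_def] using h.comp_hasDerivAt x hf

namespace Matrix

section Algebra

variable {n R : Type*} [Fintype n] [DecidableEq n] [CommRing R] {A B Ab Bb : Matrix n n R}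

theorem transpose_mul_mul_nonsing_inv (hA : IsUnit A) (h : Aᵀ * B = Bᵀ * A) :
    Aᵀ * (B * A⁻¹) = Bᵀ := by
  rw [← Matrix.mul_assoc, h, Matrix.mul_assoc, mul_nonsing_inv _ ((isUnit_iff_isUnit_det A).mp hA),
    Matrix.mul_one]

theorem isSymm_mul_nonsing_inv (hA : IsUnit A) (h : Aᵀ * B = Bᵀ * A) : (B * A⁻¹).IsSymm := by
  have hAT := isUnit_det_transpose A ((isUnit_iff_isUnit_det A).mp hA)
  rw [IsSymm, transpose_mul, transpose_nonsing_inv, ← transpose_mul_mul_nonsing_inv hA h,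
    ← Matrix.mul_assoc, nonsing_inv_mul _ hAT, Matrix.one_mul]

theorem sub_mul_nonsing_inv_mul_eq_transpose_inv (hA : IsUnit A) (h₁ : Aᵀ * B = Bᵀ * A)
    (h₂ : Aᵀ * Bb - Bᵀ * Ab = 1) : Bb - B * A⁻¹ * Ab = Aᵀ⁻¹ := by
  refine (inv_eq_right_inv ?_).symm
  rw [Matrix.mul_sub, ← Matrix.mul_assoc, transpose_mul_mul_nonsing_inv hA h₁, h₂]

theorem transpose_mul_mul_transpose_inv_mul (hA : IsUnit A) : Aᵀ * (A * Aᵀ)⁻¹ * A = 1 := by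
  have hdet := (isUnit_iff_isUnit_det A).mp hA
  rw [mul_inv_rev, ← Matrix.mul_assoc, mul_nonsing_inv _ (isUnit_det_transpose A hdet),
    Matrix.one_mul, nonsing_inv_mul _ hdet]

end Algebra

theorem posDef_mul_transpose_inv {n K : Type*} [Fintype n] [DecidableEq n] [Field K]
    [PartialOrder K] [StarRing K] [StarOrderedRing K] [TrivialStar K] {A : Matrix n n K}
    (hA : IsUnit A) : (A * Aᵀ)⁻¹.PosDef := by
  rw [← conjTranspose_eq_transpose_of_trivial]
  exact (PosDef.mul_conjTranspose_self A (vecMul_injective_of_isUnit hA)).inv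

section Calculus

variable {n 𝕜 : Type*} [Fintype n] [DecidableEq n] [NontriviallyNormedField 𝕜] [CompleteSpace 𝕜]
  {A B : 𝕜 → Matrix n n 𝕜} {A' B' : Matrix n n 𝕜} {t : 𝕜}

theorem _root_.HasDerivAt.matrix_mul_inv (hB : HasDerivAt B B' t) (hA : HasDerivAt A A' t)
    (hAt : IsUnit (A t)) :
    HasDerivAt (fun u => B u * (A u)⁻¹) ((B' - B t * (A t)⁻¹ * A') * (A t)⁻¹) t := by
  rw [show (B' - B t * (A t)⁻¹ * A') * (A t)⁻¹ = B' * (A t)⁻¹ + B t * -((A t)⁻¹ * A' * (A t)⁻¹) by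
    noncomm_ring]
  -- The entrywise sup norm is not submultiplicative; the derivative only depends on the topology,
  -- which the operator norm induces as well.
  let _ := Matrix.linftyOpNormedRing (n := n) (α := 𝕜)
  let _ := Matrix.linftyOpNormedAlgebra (R := 𝕜) (n := n) (α := 𝕜)
  have : @CompleteSpace (Matrix n n 𝕜)
      (Matrix.linftyOpNormedRing (n := n) (α := 𝕜)).toUniformSpace := by
    let _ := Matrix.linftyOpNormedSpace (R := 𝕜) (m := n) (n := n) (α := 𝕜)
    exact FiniteDimensional.complete 𝕜 _
  have hinv := hA.ringInverse hAt
  simp only [← nonsing_inv_eq_ringInverse] at hinv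
  exact hB.mul hinv

end Calculus

end Matrix

theorem stmt15_general (n : ℕ) (I : Set ℝ)
    (Sg A B Ab Bb : ℝ → Matrix (Fin n) (Fin n) ℝ)
    (hA : ∀ t ∈ I, HasDerivAt A (A t * Sg t + Ab t) t)
    (hB : ∀ t ∈ I, HasDerivAt B (B t * Sg t + Bb t) t)
    (hsymp1 : ∀ t ∈ I, (A t)ᵀ * B t = (B t)ᵀ * A t)
    (hsymp2 : ∀ t ∈ I, (A t)ᵀ * Bb t - (B t)ᵀ * Ab t = 1)
    (hAinv : ∀ t ∈ I, IsUnit (A t)) :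
    ∀ t ∈ I,
      (B t * (A t)⁻¹)ᵀ = B t * (A t)⁻¹ ∧
      HasDerivAt (fun u => B u * (A u)⁻¹) ((A t * (A t)ᵀ)⁻¹) t ∧
      ((A t * (A t)ᵀ)⁻¹).PosDef ∧
      (A t)ᵀ * (A t * (A t)ᵀ)⁻¹ * A t = 1 := by
  intro t ht
  have hAt := hAinv t ht
  have hS' := (hB t ht).matrix_mul_inv (hA t ht) hAt
  have hcancel : B t * Sg t + Bb t - B t * (A t)⁻¹ * (A t * Sg t + Ab t) =
      Bb t - B t * (A t)⁻¹ * Ab t := by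
    rw [Matrix.mul_add, Matrix.mul_assoc (B t), ← Matrix.mul_assoc _ (A t),
      nonsing_inv_mul _ ((isUnit_iff_isUnit_det _).mp hAt), Matrix.one_mul]
    abel
  rw [hcancel, sub_mul_nonsing_inv_mul_eq_transpose_inv hAt (hsymp1 t ht) (hsymp2 t ht),
    ← Matrix.mul_inv_rev] at hS'
  exact ⟨(isSymm_mul_nonsing_inv hAt (hsymp1 t ht)).eq, hS', posDef_mul_transpose_inv hAt,
    transpose_mul_mul_transpose_inv_mul hAt⟩

/-- if `A' = AΣ + Ā`, `B' = BΣ + B̄` with `Σ` skew-symmetric, the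
symplectic relations `AᵀB = BᵀA` and `AᵀB̄ − BᵀĀ = Id` hold, and `A` is invertible,
then `S = B A⁻¹` is symmetric with `S' = (AAᵀ)⁻¹`; in particular `S'` is positive
definite and `Aᵀ S' A = Id`. -/
theorem stmt15 (n : ℕ) (I : Set ℝ) (hI : IsOpen I)
    (Sg A B Ab Bb : ℝ → Matrix (Fin n) (Fin n) ℝ)
    (hSg : ∀ t ∈ I, (Sg t)ᵀ = -(Sg t))
    (hA : ∀ t ∈ I, HasDerivAt A (A t * Sg t + Ab t) t)
    (hB : ∀ t ∈ I, HasDerivAt B (B t * Sg t + Bb t) t)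
    (hsymp1 : ∀ t ∈ I, (A t)ᵀ * B t = (B t)ᵀ * A t)
    (hsymp2 : ∀ t ∈ I, (A t)ᵀ * Bb t - (B t)ᵀ * Ab t = 1)
    (hAinv : ∀ t ∈ I, IsUnit (A t)) :
    ∀ t ∈ I,
      (B t * (A t)⁻¹)ᵀ = B t * (A t)⁻¹ ∧
      HasDerivAt (fun u => B u * (A u)⁻¹) ((A t * (A t)ᵀ)⁻¹) t ∧
      ((A t * (A t)ᵀ)⁻¹).PosDef ∧
      (A t)ᵀ * (A t * (A t)ᵀ)⁻¹ * A t = 1 :=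
  stmt15_general n I Sg A B Ab Bb hA hB hsymp1 hsymp2 hAinv
end
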